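/- arXiv:2502.12229 — 3 statements merged into one kernel-verified Lean document; each statement's English description precedes it below -/
import Mathlib

section
/- Let μ be a measure on ℝ with all moments finite and infinite support, with supp(μ) ⊆ [0,∞) and μ({0}) = 0. Assume that for every k ∈ ℕ₀ the polynomials are dense in L²(x^k·μ), where x^k·μ denotes the measure with density x ↦ x^k with respect to μ. Then for every n ∈ ℕ₀, the linear span of the monomial functions {x ↦ x^k : k ≥ n} is dense in L²(μ). -/
open MeasureTheory Polynomial Filter

noncomputable section

/-- A measure on `ℝ` has all moments finite. -/
def HasAllMoments (μ : Measure ℝ) : Prop :=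
  ∀ n : ℕ, Integrable (fun x : ℝ => |x| ^ n) μ

/-- The (topological) support of a measure on `ℝ`: points all of whose
neighborhoods have positive measure. -/
def mSupp (μ : Measure ℝ) : Set ℝ :=
  {x : ℝ | ∀ U ∈ nhds x, μ U ≠ 0}

/-- A measure with all moments finite is determinate if it is the unique measure
with all moments finite having its moment sequence. -/
def IsDeterminate (μ : Measure ℝ) : Prop :=
  ∀ ν : Measure ℝ, HasAllMoments ν →
    (∀ n : ℕ, ∫ x, x ^ n ∂ν = ∫ x, x ^ n ∂μ) → ν = μ

/-- The complex polynomial functions are dense in `L²(ν)`. -/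
def PolyDense (ν : Measure ℝ) : Prop :=
  Dense {f : Lp ℂ 2 ν | ∃ p : Polynomial ℂ, ⇑f =ᵐ[ν] fun x : ℝ => p.eval (x : ℂ)}

/-!
Multiplication by `x ^ n` is an isometry from `L²(x ^ (2 * n) • μ)` onto `L²(μ)`: the weight
turns one `L²`-norm into the other, and since `μ {0} = 0` every `f ∈ L²(μ)` is the image of
`f / x ^ n`. A continuous surjection maps dense sets to dense sets, and it maps the polynomials,
dense in `L²(x ^ (2 * n) • μ)` by hypothesis, to the polynomials divisible by `X ^ n`.
-/

open scoped ENNReal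

section SmulLp

variable {α 𝕜 E : Type*} [MeasurableSpace α] [RCLike 𝕜] [NormedAddCommGroup E]
  [NormedSpace 𝕜 E] {μ : Measure α} {φ : α → 𝕜} {p : ℝ≥0∞}

theorem eLpNorm_withDensity_enorm_rpow (hφ : Measurable φ) (hp0 : p ≠ 0) (hp : p ≠ ∞)
    (f : α → E) :
    eLpNorm f p (μ.withDensity fun x => ‖φ x‖ₑ ^ p.toReal) = eLpNorm (φ • f) p μ := by
  rw [eLpNorm_eq_lintegral_rpow_enorm_toReal hp0 hp, eLpNorm_eq_lintegral_rpow_enorm_toReal hp0 hp,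
    lintegral_withDensity_eq_lintegral_mul_non_measurable _ (by fun_prop)
      (ae_of_all _ fun x => by finiteness)]
  congr 2 with x
  simp only [Pi.mul_apply, Pi.smul_apply', enorm_smul,
    ENNReal.mul_rpow_of_nonneg _ _ ENNReal.toReal_nonneg]

theorem absolutelyContinuous_withDensity_enorm_rpow (hφ : Measurable φ)
    (hφ0 : ∀ᵐ x ∂μ, φ x ≠ 0) :
    μ ≪ μ.withDensity fun x => ‖φ x‖ₑ ^ p.toReal := by
  refine withDensity_absolutelyContinuous' (by fun_prop) ?_
  filter_upwards [hφ0] with x hx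
  simp [hx]

theorem MemLp.smul_of_withDensity (hφ : Measurable φ) (hφ0 : ∀ᵐ x ∂μ, φ x ≠ 0) (hp0 : p ≠ 0)
    (hp : p ≠ ∞) {f : α → E} (hf : MemLp f p (μ.withDensity fun x => ‖φ x‖ₑ ^ p.toReal)) :
    MemLp (φ • f) p μ :=
  ⟨hφ.aestronglyMeasurable.smul
      (hf.1.mono_ac (absolutelyContinuous_withDensity_enorm_rpow hφ hφ0)),
    eLpNorm_withDensity_enorm_rpow hφ hp0 hp f ▸ hf.2⟩

theorem MemLp.inv_smul_withDensity (hφ : Measurable φ) (hφ0 : ∀ᵐ x ∂μ, φ x ≠ 0) (hp0 : p ≠ 0)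
    (hp : p ≠ ∞) {f : α → E} (hf : MemLp f p μ) :
    MemLp (φ⁻¹ • f) p (μ.withDensity fun x => ‖φ x‖ₑ ^ p.toReal) := by
  refine ⟨(hφ.inv.aestronglyMeasurable.smul hf.1).mono_ac (withDensity_absolutelyContinuous _ _),
    ?_⟩
  have hφf : φ • φ⁻¹ • f =ᵐ[μ] f := by
    filter_upwards [hφ0] with x hx
    simp [smul_smul, hx]
  rw [eLpNorm_withDensity_enorm_rpow hφ hp0 hp, eLpNorm_congr_ae hφf]
  exact hf.2

variable [Fact (1 ≤ p)]

def smulLp (hφ : Measurable φ) (hφ0 : ∀ᵐ x ∂μ, φ x ≠ 0) (hp : p ≠ ∞)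
    (f : Lp E p (μ.withDensity fun x => ‖φ x‖ₑ ^ p.toReal)) : Lp E p μ :=
  (MemLp.smul_of_withDensity hφ hφ0 (zero_lt_one.trans_le Fact.out).ne' hp (Lp.memLp f)).toLp _

variable (hφ : Measurable φ) (hφ0 : ∀ᵐ x ∂μ, φ x ≠ 0) (hp : p ≠ ∞)

theorem coeFn_smulLp (f : Lp E p (μ.withDensity fun x => ‖φ x‖ₑ ^ p.toReal)) :
    smulLp hφ hφ0 hp f =ᵐ[μ] φ • f :=
  MemLp.coeFn_toLp _

theorem isometry_smulLp : Isometry (smulLp (E := E) hφ hφ0 hp) := by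
  refine Isometry.of_dist_eq fun f g => ?_
  rw [Lp.dist_def, Lp.dist_def, eLpNorm_withDensity_enorm_rpow hφ
    (zero_lt_one.trans_le Fact.out).ne' hp]
  congr 1
  refine eLpNorm_congr_ae ?_
  filter_upwards [coeFn_smulLp hφ hφ0 hp f, coeFn_smulLp hφ hφ0 hp g] with x hf hg
  simp [hf, hg, smul_sub]

theorem surjective_smulLp : Function.Surjective (smulLp (E := E) hφ hφ0 hp) := by
  intro f
  have hp0 : p ≠ 0 := (zero_lt_one.trans_le Fact.out).ne'
  have hg := MemLp.inv_smul_withDensity hφ hφ0 hp0 hp (Lp.memLp f)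
  refine ⟨hg.toLp _, Lp.ext ?_⟩
  filter_upwards [coeFn_smulLp hφ hφ0 hp (hg.toLp _),
    (absolutelyContinuous_withDensity_enorm_rpow hφ hφ0).ae_le hg.coeFn_toLp, hφ0]
    with x hx₁ hx₂ hx
  simp [hx₁, hx₂, smul_smul, hx]

theorem Dense.smulLp_image {s : Set (Lp E p (μ.withDensity fun x => ‖φ x‖ₑ ^ p.toReal))}
    (hs : Dense s) : Dense (smulLp hφ hφ0 hp '' s) :=
  (surjective_smulLp hφ hφ0 hp).denseRange.dense_image (isometry_smulLp hφ hφ0 hp).continuous hs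

end SmulLp

theorem stmt1_general (μ : Measure ℝ) (hmass : μ {0} = 0)
    (hdense : ∀ k : ℕ, PolyDense (μ.withDensity fun x => ENNReal.ofReal (x ^ k)))
    (n : ℕ) :
    Dense {f : Lp ℂ 2 μ | ∃ p : Polynomial ℂ,
      (∀ j : ℕ, j < n → p.coeff j = 0) ∧
      ⇑f =ᵐ[μ] fun x : ℝ => p.eval (x : ℂ)} := by
  set φ : ℝ → ℂ := fun x => (x : ℂ) ^ n
  have hφ : Measurable φ := by fun_prop
  have hφ0 : ∀ᵐ x ∂μ, φ x ≠ 0 := by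
    filter_upwards [compl_mem_ae_iff.mpr hmass] with x hx
    exact pow_ne_zero n (Complex.ofReal_ne_zero.mpr hx)
  have hweight : (fun x : ℝ => ENNReal.ofReal (x ^ (2 * n))) =
      fun x => ‖φ x‖ₑ ^ (2 : ℝ≥0∞).toReal := by
    ext x
    rw [ENNReal.toReal_ofNat, ENNReal.rpow_two, ← ofReal_norm, ← ENNReal.ofReal_pow (norm_nonneg _),
      norm_pow, Complex.norm_real, Real.norm_eq_abs, ← abs_pow, sq_abs, ← pow_mul, mul_comm]
  have hpoly := hdense (2 * n)
  rw [PolyDense, hweight] at hpoly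
  refine (hpoly.smulLp_image hφ hφ0 ENNReal.ofNat_ne_top).mono ?_
  rintro _ ⟨F, ⟨q, hq⟩, rfl⟩
  refine ⟨X ^ n * q, X_pow_dvd_iff.mp (dvd_mul_right _ q), ?_⟩
  filter_upwards [coeFn_smulLp hφ hφ0 ENNReal.ofNat_ne_top F,
    (absolutelyContinuous_withDensity_enorm_rpow hφ hφ0).ae_le hq] with x hF hq
  simp [hF, hq, φ]

theorem stmt1 (μ : Measure ℝ) (hmom : HasAllMoments μ) (hinf : (mSupp μ).Infinite)
    (hsupp : mSupp μ ⊆ Set.Ici (0 : ℝ)) (hmass : μ {0} = 0)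
    (hdense : ∀ k : ℕ, PolyDense (μ.withDensity fun x => ENNReal.ofReal (x ^ k)))
    (n : ℕ) :
    Dense {f : Lp ℂ 2 μ | ∃ p : Polynomial ℂ,
      (∀ j : ℕ, j < n → p.coeff j = 0) ∧
      ⇑f =ᵐ[μ] fun x : ℝ => p.eval (x : ℂ)} :=
  stmt1_general μ hmass hdense n
end
end

section
/- Let μ be a measure on ℝ with all moments finite and infinite support, with supp(μ) ⊆ [0,∞) and μ({0}) = 0, and let n ∈ ℕ₀. If the polynomials are dense in L²(x^{2n}·μ), where x^{2n}·μ denotes the measure with density x ↦ x^{2n} with respect to μ, then the linear span of the monomial functions {x ↦ x^k : k ≥ n} is dense in L²(μ). -/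
/-!
Multiplication by `x ^ n` is an isometry of `L²(x^{2n} μ)` into `L²(μ)`, and it is onto because
`x ^ n ≠ 0` for `μ`-almost every `x` when `μ {0} = 0`. Being a continuous surjection, it maps the
dense set of polynomials `p` onto a dense set, made of the polynomials `X ^ n * p`, whose
coefficients below `n` vanish.
-/

open MeasureTheory Polynomial Filter

noncomputable section

namespace MeasureTheory

section WeightedLp

variable {α 𝕜 : Type*} [MeasurableSpace α] [RCLike 𝕜] {μ : Measure α} {p : ENNReal}
  {h : α → 𝕜}

theorem eLpNorm_mul_eq_eLpNorm_withDensity (hh : Measurable h) (hp0 : p ≠ 0) (hp : p ≠ ⊤)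
    (φ : α → 𝕜) :
    eLpNorm (h * φ) p μ = eLpNorm φ p (μ.withDensity fun x => ‖h x‖ₑ ^ p.toReal) := by
  simp only [eLpNorm_eq_lintegral_rpow_enorm_toReal hp0 hp]
  rw [lintegral_withDensity_eq_lintegral_mul_non_measurable _
    (hh.enorm.pow_const _) (.of_forall fun x => by finiteness)]
  simp_rw [Pi.mul_apply, enorm_mul, ENNReal.mul_rpow_of_nonneg _ _ ENNReal.toReal_nonneg]

theorem memLp_withDensity_iff_memLp_mul (hh : Measurable h) (hp0 : p ≠ 0) (hp : p ≠ ⊤)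
    {φ : α → 𝕜} (hφ : StronglyMeasurable φ) :
    MemLp φ p (μ.withDensity fun x => ‖h x‖ₑ ^ p.toReal) ↔ MemLp (h * φ) p μ := by
  simp only [MemLp, ← eLpNorm_mul_eq_eLpNorm_withDensity hh hp0 hp,
    hφ.aestronglyMeasurable, (hh.stronglyMeasurable.mul hφ).aestronglyMeasurable, true_and]

theorem ae_mul_eq_of_ae_eq_withDensity (hh : Measurable h) {φ ψ : α → 𝕜}
    (hφψ : φ =ᵐ[μ.withDensity fun x => ‖h x‖ₑ ^ p.toReal] ψ) : h * φ =ᵐ[μ] h * ψ := by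
  filter_upwards [(ae_withDensity_iff (hh.enorm.pow_const _)).1 hφψ] with x hx
  by_cases hx0 : h x = 0
  · simp [hx0]
  · simp [hx (by simp [hx0])]

variable [Fact (1 ≤ p)]

/-- `⇑f` is a strongly measurable representative, so `h * ⇑f` is `μ`-measurable although `f` is
only determined almost everywhere for the weighted measure. -/
def Lp.mulWithDensity (hh : Measurable h) (hp : p ≠ ⊤)
    (f : Lp 𝕜 p (μ.withDensity fun x => ‖h x‖ₑ ^ p.toReal)) : Lp 𝕜 p μ :=
  ((memLp_withDensity_iff_memLp_mul hh (zero_lt_one.trans_le Fact.out).ne' hp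
    (Lp.stronglyMeasurable f)).1 (Lp.memLp f)).toLp _

theorem Lp.coeFn_mulWithDensity (hh : Measurable h) (hp : p ≠ ⊤)
    (f : Lp 𝕜 p (μ.withDensity fun x => ‖h x‖ₑ ^ p.toReal)) :
    Lp.mulWithDensity hh hp f =ᵐ[μ] h * f :=
  MemLp.coeFn_toLp _

theorem Lp.isometry_mulWithDensity (hh : Measurable h) (hp : p ≠ ⊤) :
    Isometry (Lp.mulWithDensity (μ := μ) hh hp) := by
  refine isometry_iff_dist_eq.2 fun f g => ?_
  have hfg : (⇑(Lp.mulWithDensity hh hp f) - ⇑(Lp.mulWithDensity hh hp g) : α → 𝕜)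
      =ᵐ[μ] h * (⇑f - ⇑g) := by
    filter_upwards [Lp.coeFn_mulWithDensity hh hp f, Lp.coeFn_mulWithDensity hh hp g]
      with x hf hg
    simp [hf, hg, mul_sub]
  rw [Lp.dist_def, Lp.dist_def, eLpNorm_congr_ae hfg,
    eLpNorm_mul_eq_eLpNorm_withDensity hh (zero_lt_one.trans_le Fact.out).ne' hp]

theorem Lp.surjective_mulWithDensity (hh : Measurable h) (hp : p ≠ ⊤)
    (h0 : ∀ᵐ x ∂μ, h x ≠ 0) : Function.Surjective (Lp.mulWithDensity (μ := μ) hh hp) := by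
  intro g
  have hφ : StronglyMeasurable fun x => g x / h x :=
    ((Lp.stronglyMeasurable g).measurable.div hh).stronglyMeasurable
  have hg : (h * fun x => g x / h x) =ᵐ[μ] g := by
    filter_upwards [h0] with x hx
    exact mul_div_cancel₀ _ hx
  have hmem := (memLp_withDensity_iff_memLp_mul hh (zero_lt_one.trans_le Fact.out).ne' hp
    hφ).2 ((Lp.memLp g).ae_eq hg.symm)
  refine ⟨hmem.toLp _, Lp.ext ?_⟩
  filter_upwards [Lp.coeFn_mulWithDensity hh hp (hmem.toLp _),
    ae_mul_eq_of_ae_eq_withDensity hh hmem.coeFn_toLp, hg] with x h1 h2 h3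
  rw [h1, h2, h3]

theorem dense_setOf_ae_eq_mul_of_dense_withDensity (hh : Measurable h) (hp : p ≠ ⊤)
    (h0 : ∀ᵐ x ∂μ, h x ≠ 0) {F : Set (α → 𝕜)}
    (hF : Dense {f : Lp 𝕜 p (μ.withDensity fun x => ‖h x‖ₑ ^ p.toReal) |
      ∃ φ ∈ F, f =ᵐ[μ.withDensity fun x => ‖h x‖ₑ ^ p.toReal] φ}) :
    Dense {g : Lp 𝕜 p μ | ∃ φ ∈ F, g =ᵐ[μ] h * φ} := by
  refine (((Lp.surjective_mulWithDensity hh hp h0).denseRange.dense_image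
    (Lp.isometry_mulWithDensity hh hp).continuous hF)).mono ?_
  rintro _ ⟨f, ⟨φ, hφF, hfφ⟩, rfl⟩
  exact ⟨φ, hφF, (Lp.coeFn_mulWithDensity hh hp f).trans
    (ae_mul_eq_of_ae_eq_withDensity hh hfφ)⟩

end WeightedLp

end MeasureTheory

theorem enorm_ofReal_pow_rpow_two (x : ℝ) (n : ℕ) :
    ‖(x : ℂ) ^ n‖ₑ ^ (2 : ENNReal).toReal = ENNReal.ofReal (x ^ (2 * n)) := by
  rw [← ofReal_norm, ENNReal.ofReal_rpow_of_nonneg (norm_nonneg _) (by norm_num),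
    ENNReal.toReal_ofNat, Real.rpow_two, norm_pow, Complex.norm_real, Real.norm_eq_abs,
    ← pow_mul, mul_comm, pow_mul, sq_abs, ← pow_mul]

theorem stmt2_general (μ : Measure ℝ) (hmass : μ {0} = 0) (n : ℕ)
    (hdense : PolyDense (μ.withDensity fun x => ENNReal.ofReal (x ^ (2 * n)))) :
    Dense {f : Lp ℂ 2 μ | ∃ p : Polynomial ℂ,
      (∀ j : ℕ, j < n → p.coeff j = 0) ∧
      ⇑f =ᵐ[μ] fun x : ℝ => p.eval (x : ℂ)} := by
  have hh : Measurable fun x : ℝ => (x : ℂ) ^ n := by fun_prop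
  have h0 : ∀ᵐ x : ℝ ∂μ, (x : ℂ) ^ n ≠ 0 :=
    measure_mono_null (fun x hx => by simp_all) hmass
  rw [PolyDense, show (fun x : ℝ => ENNReal.ofReal (x ^ (2 * n))) = _ from
    funext fun x => (enorm_ofReal_pow_rpow_two x n).symm] at hdense
  refine (dense_setOf_ae_eq_mul_of_dense_withDensity hh ENNReal.ofNat_ne_top h0
    (p := 2) (F := Set.range fun q : ℂ[X] => fun x : ℝ => q.eval (x : ℂ))
    (by simpa using hdense)).mono ?_
  rintro g ⟨_, ⟨q, rfl⟩, hg⟩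
  exact ⟨X ^ n * q, fun j hj => by simp [coeff_X_pow_mul', hj],
    hg.trans (.of_forall fun x => by simp)⟩

theorem stmt2 (μ : Measure ℝ) (hmom : HasAllMoments μ) (hinf : (mSupp μ).Infinite)
    (hsupp : mSupp μ ⊆ Set.Ici (0 : ℝ)) (hmass : μ {0} = 0) (n : ℕ)
    (hdense : PolyDense (μ.withDensity fun x => ENNReal.ofReal (x ^ (2 * n)))) :
    Dense {f : Lp ℂ 2 μ | ∃ p : Polynomial ℂ,
      (∀ j : ℕ, j < n → p.coeff j = 0) ∧
      ⇑f =ᵐ[μ] fun x : ℝ => p.eval (x : ℂ)} :=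
  stmt2_general μ hmass n hdense
end
end

section
/- Let ρ be a measure on ℝ with all moments finite, let C > 0, and let w : ℝ → [0,∞) be a measurable function with w(x) ≤ C for ρ-almost every x. If the polynomials are dense in L²(ρ), then the polynomials are dense in L²(w·ρ), where w·ρ denotes the measure with density w with respect to ρ. -/
open MeasureTheory Polynomial Filter

noncomputable section

/-!
Since `w ≤ C` almost everywhere, `w·ρ ≤ C·ρ`, so the identity on functions induces a bounded map
`L²(ρ) → L²(w·ρ)`. Its range contains all simple functions (`ρ` is finite, having a zeroth moment),
hence is dense, and a continuous map with dense range carries the dense set of polynomials in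
`L²(ρ)` onto a dense subset of the polynomials in `L²(w·ρ)`.
-/

open scoped ENNReal

namespace MeasureTheory.Lp

variable {α E : Type*} [MeasurableSpace α] [NormedAddCommGroup E] {p : ℝ≥0∞}
  {μ ν : Measure α} {c : ℝ≥0∞}

def ofLESMul (hνμ : ν ≤ c • μ) (hc : c ≠ ∞) (f : Lp E p μ) : Lp E p ν :=
  (((Lp.memLp f).smul_measure hc).mono_measure hνμ).toLp f

theorem coeFn_ofLESMul (hνμ : ν ≤ c • μ) (hc : c ≠ ∞) (f : Lp E p μ) :
    ofLESMul hνμ hc f =ᵐ[ν] f :=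
  MemLp.coeFn_toLp _

theorem lipschitzWith_ofLESMul [Fact (1 ≤ p)] (hνμ : ν ≤ c • μ) (hc : c ≠ ∞) :
    LipschitzWith (c ^ (1 / p).toReal).toNNReal (ofLESMul (E := E) (p := p) hνμ hc) := by
  intro f g
  have hcoe : (((c ^ (1 / p).toReal).toNNReal : ℝ≥0∞)) = c ^ (1 / p).toReal :=
    ENNReal.coe_toNNReal (ENNReal.rpow_ne_top_of_nonneg ENNReal.toReal_nonneg hc)
  have hsub : ⇑(ofLESMul hνμ hc f) - ⇑(ofLESMul hνμ hc g) =ᵐ[ν] ⇑f - ⇑g :=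
    (coeFn_ofLESMul hνμ hc f).sub (coeFn_ofLESMul hνμ hc g)
  rw [edist_def, edist_def, hcoe, eLpNorm_congr_ae hsub]
  calc eLpNorm (⇑f - ⇑g) p ν ≤ eLpNorm (⇑f - ⇑g) p (c • μ) := eLpNorm_mono_measure _ hνμ
    _ ≤ c ^ (1 / p).toReal * eLpNorm (⇑f - ⇑g) p μ := eLpNorm_smul_measure_le _ _ _ _

theorem denseRange_ofLESMul [Fact (1 ≤ p)] [IsFiniteMeasure μ] (hp : p ≠ ∞) (hνμ : ν ≤ c • μ)
    (hc : c ≠ ∞) :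
    DenseRange (ofLESMul (E := E) (p := p) hνμ hc) := by
  refine (simpleFunc.dense hp).mono fun g hg => ?_
  set s := simpleFunc.toSimpleFunc ⟨g, hg⟩
  have hs : MemLp s p μ := s.memLp_of_isFiniteMeasure p μ
  refine ⟨hs.toLp s, Lp.ext ?_⟩
  filter_upwards [coeFn_ofLESMul hνμ hc (hs.toLp s),
    Measure.absolutelyContinuous_of_le_smul hνμ hs.coeFn_toLp,
    simpleFunc.toSimpleFunc_eq_toFun ⟨g, hg⟩] with x h₁ h₂ h₃
  rw [h₁, h₂, h₃]

theorem dense_setOf_ae_eq_of_le_smul [Fact (1 ≤ p)] [IsFiniteMeasure μ] (hp : p ≠ ∞)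
    (hνμ : ν ≤ c • μ) (hc : c ≠ ∞) {ι : Type*} (F : ι → α → E)
    (hF : Dense {f : Lp E p μ | ∃ i, ⇑f =ᵐ[μ] F i}) :
    Dense {f : Lp E p ν | ∃ i, ⇑f =ᵐ[ν] F i} :=
  (denseRange_ofLESMul hp hνμ hc).dense_of_mapsTo (lipschitzWith_ofLESMul hνμ hc).continuous hF
    fun f ⟨i, hi⟩ => ⟨i, (coeFn_ofLESMul hνμ hc f).trans
      (Measure.absolutelyContinuous_of_le_smul hνμ hi)⟩

end MeasureTheory.Lp

theorem HasAllMoments.isFiniteMeasure {μ : Measure ℝ} (h : HasAllMoments μ) :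
    IsFiniteMeasure μ :=
  (integrable_const_iff_isFiniteMeasure one_ne_zero).mp (by simpa using h 0)

theorem PolyDense.of_le_smul {ρ ν : Measure ℝ} [IsFiniteMeasure ρ] {c : ℝ≥0∞} (hνρ : ν ≤ c • ρ)
    (hc : c ≠ ∞) (hρ : PolyDense ρ) : PolyDense ν :=
  Lp.dense_setOf_ae_eq_of_le_smul ENNReal.ofNat_ne_top hνρ hc _ hρ

theorem withDensity_ofReal_le_smul {α : Type*} [MeasurableSpace α] {μ : Measure α}
    {w : α → ℝ} {C : ℝ} (hwC : ∀ᵐ x ∂μ, w x ≤ C) :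
    μ.withDensity (fun x => ENNReal.ofReal (w x)) ≤ ENNReal.ofReal C • μ := by
  rw [← withDensity_const]
  exact withDensity_mono (hwC.mono fun x hx => ENNReal.ofReal_le_ofReal hx)

theorem stmt13_general (ρ : Measure ℝ) (hmom : HasAllMoments ρ) (C : ℝ) (w : ℝ → ℝ)
    (hwC : ∀ᵐ x ∂ρ, w x ≤ C) (hdense : PolyDense ρ) :
    PolyDense (ρ.withDensity fun x => ENNReal.ofReal (w x)) :=
  have := hmom.isFiniteMeasure
  hdense.of_le_smul (withDensity_ofReal_le_smul hwC) ENNReal.ofReal_ne_top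

theorem stmt13 (ρ : Measure ℝ) (hmom : HasAllMoments ρ) (C : ℝ) (hC : 0 < C)
    (w : ℝ → ℝ) (hwmeas : Measurable w) (hw0 : ∀ x, 0 ≤ w x)
    (hwC : ∀ᵐ x ∂ρ, w x ≤ C) (hdense : PolyDense ρ) :
    PolyDense (ρ.withDensity fun x => ENNReal.ofReal (w x)) :=
  stmt13_general ρ hmom C w hwC hdense
end
end
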